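/- arXiv:math/0510454 — 3 statements merged into one kernel-verified Lean document; each statement's English description precedes it below -/
import Mathlib

section
/- Let Ω be an associative unital ℂ-algebra with an ℕ-grading Ω = ⊕_{k≥0} Ω^k (so Ω^k·Ω^l ⊆ Ω^{k+l} and 1 ∈ Ω^0), and let d : Ω → Ω be a ℂ-linear map with d(Ω^k) ⊆ Ω^{k+1}, d∘d = 0, and the graded Leibniz rule d(ωη) = (dω)η + (−1)^k ω(dη) for ω ∈ Ω^k. Let m ∈ ℕ and let τ̄ : Ω → ℂ be ℂ-linear such that τ̄ vanishes on Ω^k for every k ≠ m, τ̄(ωη) = (−1)^{kl} τ̄(ηω) for all ω ∈ Ω^k and η ∈ Ω^l, and τ̄(dω) = 0 for all ω ∈ Ω. Then the (m+1)-linear functional on A := Ω^0 defined by χ(a_0,…,a_m) := τ̄(a_0 · (da_1)·(da_2)⋯(da_m)) is cyclic, i.e. χ(a_m, a_0, a_1, …, a_{m−1}) = (−1)^m χ(a_0, …, a_m) for all a_0,…,a_m ∈ A, and is a Hochschild cocycle, i.e. bχ = 0. -/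
/-- Replacing the `j`-th and `(j+1)`-th arguments of an `(m+2)`-tuple by their product,
yielding an `(m+1)`-tuple: `(a_0, …, a_j ⬝ a_{j+1}, …, a_{m+1})`. -/
def hochMul {A : Type*} (mul : A → A → A) (m : ℕ) (j : Fin (m + 1)) (a : Fin (m + 2) → A) :
    Fin (m + 1) → A := fun i =>
  if (i : ℕ) < (j : ℕ) then a i.castSucc
  else if (i : ℕ) = (j : ℕ) then mul (a i.castSucc) (a i.succ)
  else a i.succ

section Aux

lemma aux_fin_succ_sub_one (n : ℕ) (i : Fin (n+1)) : (i.succ : Fin (n+2)) - 1 = i.castSucc := by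
  ext
  rw [Fin.sub_def]
  simp only [Fin.val_one, Fin.val_succ, Fin.coe_castSucc]
  have h2 : n + 1 + 1 - 1 + (↑i + 1) = ↑i + (n + 2) := by omega
  rw [h2, Nat.add_mod_right, Nat.mod_eq_of_lt (by omega)]

lemma aux_fin_zero_sub_one (n : ℕ) : (0 : Fin (n+1)) - 1 = Fin.last n := by
  cases n with
  | zero => rfl
  | succ k => ext; rw [Fin.sub_def]; simp [Nat.mod_eq_of_lt]

variable {Ω : Type*} [Ring Ω] [Algebra ℂ Ω] (𝒜 : ℕ → Submodule ℂ Ω) [GradedRing 𝒜]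
  (d : Ω →ₗ[ℂ] Ω)

set_option linter.unusedSectionVars false

lemma aux_d_one
    (hd_leibniz : ∀ k : ℕ, ∀ ω ∈ 𝒜 k, ∀ η : Ω,
      d (ω * η) = d ω * η + ((-1 : ℂ) ^ k) • (ω * d η)) : d 1 = 0 := by
  have h := hd_leibniz 0 1 (SetLike.one_mem_graded 𝒜) 1
  simpa using h

lemma aux_prod_mem (n : ℕ) (c : Fin n → Ω) (h : ∀ i, c i ∈ 𝒜 1) :
    (List.ofFn c).prod ∈ 𝒜 n := by
  induction n with
  | zero => simpa using SetLike.one_mem_graded 𝒜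
  | succ k ih =>
    rw [List.ofFn_succ, List.prod_cons]
    have := SetLike.mul_mem_graded (h 0) (ih (fun i => c i.succ) (fun i => h i.succ))
    rwa [Nat.add_comm 1 k] at this

lemma aux_d_prod
    (hd_deg : ∀ k : ℕ, ∀ ω ∈ 𝒜 k, d ω ∈ 𝒜 (k + 1))
    (hd_sq : ∀ ω : Ω, d (d ω) = 0)
    (hd_leibniz : ∀ k : ℕ, ∀ ω ∈ 𝒜 k, ∀ η : Ω,
      d (ω * η) = d ω * η + ((-1 : ℂ) ^ k) • (ω * d η))
    (n : ℕ) (c : Fin n → Ω) (h : ∀ i, c i ∈ 𝒜 0) :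
    d (List.ofFn fun i => d (c i)).prod = 0 := by
  induction n with
  | zero => simpa using aux_d_one 𝒜 d hd_leibniz
  | succ k ih =>
    rw [List.ofFn_succ, List.prod_cons]
    rw [hd_leibniz 1 (d (c 0)) (by simpa using hd_deg 0 (c 0) (h 0)) _]
    rw [hd_sq, ih (fun i => c i.succ) (fun i => h i.succ)]
    simp

lemma aux_key
    (hd_leibniz : ∀ k : ℕ, ∀ ω ∈ 𝒜 k, ∀ η : Ω,
      d (ω * η) = d ω * η + ((-1 : ℂ) ^ k) • (ω * d η)) :
    ∀ (k m : ℕ) (hk : k < m) (a : Fin (m + 2) → Ω) (_ : ∀ i, a i ∈ 𝒜 0),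
    (List.ofFn fun i : Fin m => d (hochMul (· * ·) m ⟨k+1, by omega⟩ a i.succ)).prod
      = (List.ofFn fun i : Fin (m+1) =>
          if (i:ℕ) = k+1 then a i.succ else d (a i.succ)).prod
        + (List.ofFn fun i : Fin (m+1) =>
          if (i:ℕ) = k then a i.succ else d (a i.succ)).prod := by
  intro k
  induction k with
  | zero =>
    intro m hk a ha
    obtain ⟨n, rfl⟩ : ∃ n, m = n + 1 := ⟨m - 1, by omega⟩
    have htail : ∀ i : Fin n,
        d (hochMul (· * ·) (n+1) ⟨0+1, by omega⟩ a i.succ.succ) = d (a i.succ.succ.succ) := by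
      intro i
      simp only [hochMul, Fin.val_succ]
      split_ifs with h1 h2 <;> first | rfl | omega
    have ht1 : ∀ i : Fin n,
        (if ((i.succ.succ : Fin (n+2)) : ℕ) = 0+1 then a i.succ.succ.succ
         else d (a i.succ.succ.succ)) = d (a i.succ.succ.succ) := by
      intro i; rw [if_neg]; simp
    have ht0 : ∀ i : Fin n,
        (if ((i.succ.succ : Fin (n+2)) : ℕ) = 0 then a i.succ.succ.succ
         else d (a i.succ.succ.succ)) = d (a i.succ.succ.succ) := by
      intro i; rw [if_neg]; simp
    simp only [List.ofFn_succ, List.prod_cons, Fin.val_succ, Fin.val_zero, Fin.succ_zero_eq_one]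
    simp only [htail]
    have hhead : hochMul (fun x1 x2 => x1 * x2) (n + 1) ⟨0+1, by omega⟩ a 1
        = a 1 * a (Fin.succ 1) := by
      simp [hochMul, Fin.castSucc_one]
    rw [hhead, hd_leibniz 0 (a 1) (ha 1)]
    norm_num
    noncomm_ring
  | succ k ih =>
    intro m hk a ha
    obtain ⟨n, rfl⟩ : ∃ n, m = n + 1 := ⟨m - 1, by omega⟩
    have hkn : k < n := by omega
    have htail : ∀ i : Fin n,
        d (hochMul (fun x1 x2 => x1 * x2) (n + 1) ⟨k + 1 + 1, by omega⟩ a i.succ.succ)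
          = d (hochMul (fun x1 x2 => x1 * x2) n ⟨k + 1, by omega⟩ (fun v => a v.succ) i.succ) := by
      intro i
      simp only [hochMul, Fin.val_succ]
      split_ifs <;>
        first
          | omega
          | (congr 1 <;> exact congrArg a (by ext; simp))
          | (congr 1 <;> first
              | exact congrArg a (by ext; simp)
              | (congr 1 <;> exact congrArg a (by ext; simp)))
    have hF2 : ∀ i : Fin (n + 1),
        (if ((i.succ : Fin (n+2)) : ℕ) = k + 1 + 1 then a i.succ.succ else d (a i.succ.succ))
          = (if (i : ℕ) = k + 1 then a i.succ.succ else d (a i.succ.succ)) := by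
      intro i
      by_cases h : (i : ℕ) = k + 1
      · simp [h]
      · rw [if_neg (by simp; omega), if_neg h]
    have hF1 : ∀ i : Fin (n + 1),
        (if ((i.succ : Fin (n+2)) : ℕ) = k + 1 then a i.succ.succ else d (a i.succ.succ))
          = (if (i : ℕ) = k then a i.succ.succ else d (a i.succ.succ)) := by
      intro i
      by_cases h : (i : ℕ) = k
      · simp [h]
      · rw [if_neg (by simp; omega), if_neg h]
    have hhead : hochMul (fun x1 x2 => x1 * x2) (n + 1) ⟨k + 1 + 1, by omega⟩ a 1
        = a 1 := by
      simp only [hochMul]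
      rw [if_pos (by simp [Fin.val_one])]
      exact congrArg a (by ext; simp)
    have eχ : (List.ofFn fun i : Fin (n+1) =>
          d (hochMul (fun x1 x2 => x1 * x2) (n + 1) ⟨k + 1 + 1, by omega⟩ a i.succ))
        = d (a 1) :: List.ofFn (fun i : Fin n =>
            d (hochMul (fun x1 x2 => x1 * x2) n ⟨k + 1, by omega⟩ (fun v => a v.succ) i.succ)) := by
      rw [List.ofFn_succ]
      refine congrArg₂ List.cons ?_ (congrArg List.ofFn (funext fun i => htail i))
      beta_reduce
      rw [Fin.succ_zero_eq_one, hhead]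
    have eF2 : (List.ofFn fun i : Fin (n+2) =>
          if (i : ℕ) = k + 1 + 1 then a i.succ else d (a i.succ))
        = d (a 1) :: List.ofFn (fun i : Fin (n+1) =>
            if (i : ℕ) = k + 1 then a i.succ.succ else d (a i.succ.succ)) := by
      rw [List.ofFn_succ]
      refine congrArg₂ List.cons ?_ (congrArg List.ofFn (funext fun i => hF2 i))
      beta_reduce
      rw [if_neg (by simp)]
      exact congrArg (fun z => d (a z)) (by ext; simp)
    have eF1 : (List.ofFn fun i : Fin (n+2) =>
          if (i : ℕ) = k + 1 then a i.succ else d (a i.succ))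
        = d (a 1) :: List.ofFn (fun i : Fin (n+1) =>
            if (i : ℕ) = k then a i.succ.succ else d (a i.succ.succ)) := by
      rw [List.ofFn_succ]
      refine congrArg₂ List.cons ?_ (congrArg List.ofFn (funext fun i => hF1 i))
      beta_reduce
      rw [if_neg (by simp)]
      exact congrArg (fun z => d (a z)) (by ext; simp)
    rw [eχ, eF2, eF1, List.prod_cons, List.prod_cons, List.prod_cons,
      ih n hkn (fun v => a v.succ) (fun v => ha v.succ), mul_add]

end Aux

/-- **Section 1 Lemma.** Let `Ω` be an associative unital `ℂ`-algebra with an `ℕ`-grading,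
`d` a degree-one differential satisfying `d ∘ d = 0` and the graded Leibniz rule, and
`τ` a closed graded trace concentrated in degree `m`.  Then the character
`χ(a_0, …, a_m) = τ(a_0 · d a_1 ⋯ d a_m)` on `A = Ω^0` is cyclic and is a
Hochschild cocycle (`bχ = 0`). -/
theorem residue_character_cyclic_hochschild_cocycle
    {Ω : Type*} [Ring Ω] [Algebra ℂ Ω] (𝒜 : ℕ → Submodule ℂ Ω) [GradedRing 𝒜]
    (d : Ω →ₗ[ℂ] Ω)
    (hd_deg : ∀ k : ℕ, ∀ ω ∈ 𝒜 k, d ω ∈ 𝒜 (k + 1))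
    (hd_sq : ∀ ω : Ω, d (d ω) = 0)
    (hd_leibniz : ∀ k : ℕ, ∀ ω ∈ 𝒜 k, ∀ η : Ω,
      d (ω * η) = d ω * η + ((-1 : ℂ) ^ k) • (ω * d η))
    (m : ℕ) (τ : Ω →ₗ[ℂ] ℂ)
    (hτ_deg : ∀ k : ℕ, k ≠ m → ∀ ω ∈ 𝒜 k, τ ω = 0)
    (hτ_trace : ∀ k l : ℕ, ∀ ω ∈ 𝒜 k, ∀ η ∈ 𝒜 l,
      τ (ω * η) = (-1 : ℂ) ^ (k * l) * τ (η * ω))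
    (hτ_closed : ∀ ω : Ω, τ (d ω) = 0)
    (χ : (Fin (m + 1) → Ω) → ℂ)
    (hχ : ∀ a : Fin (m + 1) → Ω,
      χ a = τ (a 0 * (List.ofFn fun i : Fin m => d (a i.succ)).prod)) :
    (∀ a : Fin (m + 1) → Ω, (∀ i, a i ∈ 𝒜 0) →
      χ (fun i => a (i - 1)) = (-1 : ℂ) ^ m * χ a) ∧
    (∀ a : Fin (m + 2) → Ω, (∀ i, a i ∈ 𝒜 0) →
      (∑ j : Fin (m + 1), (-1 : ℂ) ^ (j : ℕ) * χ (hochMul (· * ·) m j a))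
        + (-1 : ℂ) ^ (m + 1) *
            χ (fun i => if i = 0 then a (Fin.last (m + 1)) * a 0 else a i.castSucc) = 0) := by
  constructor
  · -- cyclicity
    intro a ha
    cases m with
    | zero =>
      have h1 : (fun i : Fin 1 => a (i - 1)) = a := by
        funext i
        exact congrArg a (Fin.ext (by omega))
      rw [h1, pow_zero, one_mul]
    | succ n =>
      set aL := a (Fin.last (n + 1)) with haL
      set Q := (List.ofFn fun i : Fin n => d (a i.castSucc.succ)).prod with hQ
      have hmem1 : ∀ i : Fin n, d (a i.castSucc.succ) ∈ 𝒜 1 := fun i => hd_deg 0 _ (ha _)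
      have hQmem : Q ∈ 𝒜 n := aux_prod_mem 𝒜 n _ hmem1
      have hdQ : d Q = 0 := aux_d_prod 𝒜 d hd_deg hd_sq hd_leibniz n _ (fun i => ha _)
      -- χ of the cycled tuple
      have hcyc : χ (fun i => a (i - 1)) = τ (aL * (d (a 0) * Q)) := by
        rw [hχ]
        congr 1
        rw [List.ofFn_succ, List.prod_cons]
        have e2 : ∀ i : Fin n, d (a (i.succ.succ - 1)) = d (a i.castSucc.succ) := fun i =>
          congrArg (fun z => d (a z)) (by rw [aux_fin_succ_sub_one n i.succ, ← Fin.succ_castSucc])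
        simp only [e2]
        rw [aux_fin_zero_sub_one, aux_fin_succ_sub_one n 0, Fin.castSucc_zero, ← haL, ← hQ]
      -- χ of the original tuple
      have horig : χ a = τ (a 0 * (Q * d aL)) := by
        rw [hχ]
        congr 2
        rw [List.ofFn_succ', List.concat_eq_append, List.prod_append, List.prod_cons,
          List.prod_nil, mul_one, Fin.succ_last]
      -- closedness + Leibniz
      have h0 : τ (d aL * (a 0 * Q)) + τ (aL * (d (a 0) * Q)) = 0 := by
        have hcl := hτ_closed (aL * (a 0 * Q))
        rw [hd_leibniz 0 aL (ha _) (a 0 * Q), hd_leibniz 0 (a 0) (ha 0) Q, hdQ] at hcl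
        simpa using hcl
      have hmem2 : a 0 * Q ∈ 𝒜 n := by
        have := SetLike.mul_mem_graded (ha 0) hQmem
        rwa [Nat.zero_add] at this
      have htr := hτ_trace 1 n (d aL) (hd_deg 0 aL (ha _)) (a 0 * Q) hmem2
      rw [htr] at h0
      rw [hcyc, horig, show a 0 * (Q * d aL) = a 0 * Q * d aL from (mul_assoc _ _ _).symm]
      linear_combination h0
  · -- Hochschild cocycle
    intro a ha
    set T : ℕ → ℂ := fun j => τ (a 0 *
      (List.ofFn fun i : Fin (m+1) =>
        if (i : ℕ) = j then a i.succ else d (a i.succ)).prod) with hT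
    -- the j = 0 term
    have hj0 : χ (hochMul (· * ·) m 0 a) = T 0 := by
      rw [hχ, hT]
      beta_reduce
      have hb0 : hochMul (· * ·) m 0 a 0 = a 0 * a ((0 : Fin (m+1)).succ) := by
        simp only [hochMul]
        rw [if_neg (by simp), if_pos (by simp)]
        refine congrArg₂ (· * ·) (congrArg a (by ext; simp)) rfl
      have hbtail : ∀ i : Fin m, d (hochMul (· * ·) m 0 a i.succ) = d (a i.succ.succ) := by
        intro i
        simp only [hochMul]
        rw [if_neg (by simp), if_neg (by simp)]
      have hT0 : (List.ofFn fun i : Fin (m+1) =>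
            if (i : ℕ) = 0 then a i.succ else d (a i.succ))
          = a ((0 : Fin (m+1)).succ) :: List.ofFn fun i : Fin m => d (a i.succ.succ) := by
        rw [List.ofFn_succ]
        refine congrArg₂ List.cons ?_ (congrArg List.ofFn (funext fun i => ?_))
        · beta_reduce
          rw [if_pos (by simp)]
        · beta_reduce
          rw [if_neg (by simp)]
      have hχl : (List.ofFn fun i : Fin m => d (hochMul (· * ·) m 0 a i.succ))
          = List.ofFn fun i : Fin m => d (a i.succ.succ) :=
        congrArg List.ofFn (funext hbtail)
      rw [hb0, hχl, hT0, List.prod_cons, mul_assoc]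
    -- the j = i+1 terms
    have hjs : ∀ i : Fin m, χ (hochMul (· * ·) m i.succ a) = T (↑i + 1) + T ↑i := by
      intro i
      rw [hχ, hT]
      beta_reduce
      have hb0 : hochMul (· * ·) m i.succ a 0 = a 0 := by
        simp only [hochMul]
        rw [if_pos (by simp)]
        exact congrArg a (by ext; simp)
      have hisucc : (i.succ : Fin (m+1)) = ⟨(i : ℕ) + 1, by omega⟩ := rfl
      rw [hb0, hisucc, aux_key 𝒜 d hd_leibniz (↑i) m i.isLt a ha, mul_add, map_add]
    rw [Fin.sum_univ_succ]
    simp only [Fin.val_zero, pow_zero, one_mul, Fin.val_succ]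
    rw [hj0]
    have hsum : ∀ i : Fin m, (-1 : ℂ) ^ ((i : ℕ) + 1) * χ (hochMul (· * ·) m i.succ a)
        = (fun j => (-1 : ℂ) ^ j * T j) ((i : ℕ) + 1) - (fun j => (-1 : ℂ) ^ j * T j) (i : ℕ) := by
      intro i
      rw [hjs i]
      simp only
      rw [pow_succ]
      ring
    rw [Finset.sum_congr rfl (fun i _ => hsum i), Fin.sum_univ_eq_sum_range
      (fun k => (fun j => (-1 : ℂ) ^ j * T j) (k + 1) - (fun j => (-1 : ℂ) ^ j * T j) k) m,
      Finset.sum_range_sub (fun j => (-1 : ℂ) ^ j * T j) m]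
    simp only [pow_zero, one_mul]
    -- now: T 0 + ((-1)^m * T m - T 0) + (-1)^(m+1) * χ b' = 0
    -- identify T m with χ b'
    have hlast : T m = χ (fun i : Fin (m+1) =>
        if i = 0 then a (Fin.last (m + 1)) * a 0 else a i.castSucc) := by
      rw [hχ, hT]
      beta_reduce
      rw [if_pos rfl]
      have hbtail : ∀ i : Fin m,
          d (if i.succ = (0 : Fin (m+1)) then a (Fin.last (m + 1)) * a 0 else a i.succ.castSucc)
          = d (a i.castSucc.succ) := by
        intro i
        rw [if_neg (Fin.succ_ne_zero i), ← Fin.succ_castSucc]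
      simp only [hbtail]
      have hTm : (List.ofFn fun i : Fin (m+1) =>
            if (i : ℕ) = m then a i.succ else d (a i.succ)).prod
          = (List.ofFn fun i : Fin m => d (a i.castSucc.succ)).prod * a (Fin.last (m+1)) := by
        rw [List.ofFn_succ', List.concat_eq_append, List.prod_append, List.prod_cons,
          List.prod_nil, mul_one]
        refine congrArg₂ (· * ·) (congrArg List.prod (congrArg List.ofFn
          (funext fun i => ?_))) ?_
        · beta_reduce
          rw [if_neg (by simp; omega)]
        · beta_reduce
          rw [if_pos (by simp), Fin.succ_last]
      rw [hTm]
      have hRmem : (List.ofFn fun i : Fin m => d (a i.castSucc.succ)).prod ∈ 𝒜 m :=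
        aux_prod_mem 𝒜 m _ (fun i => hd_deg 0 _ (ha _))
      have hmem2 : a 0 * (List.ofFn fun i : Fin m => d (a i.castSucc.succ)).prod ∈ 𝒜 m := by
        have := SetLike.mul_mem_graded (ha 0) hRmem
        rwa [Nat.zero_add] at this
      have htr := hτ_trace m 0 _ hmem2 (a (Fin.last (m+1))) (ha _)
      rw [← mul_assoc, htr, Nat.mul_zero, pow_zero, one_mul, ← mul_assoc]
    rw [hlast]
    ring
end

section
/- Let A be a ℂ-vector space equipped with two associative bilinear products: a commutative product · and a (possibly noncommutative) product ⋆, having a common two-sided unit 1. Let τ : A → ℂ be linear with τ(a⋆b) = τ(b⋆a) for all a, b ∈ A. Set θ(a,b) := a⋆b − a·b and, for k ∈ ℕ, define the (2k+1)-linear functional φ_{2k}(a_0,…,a_{2k}) := τ(a_0 ⋆ θ(a_1,a_2) ⋆ θ(a_3,a_4) ⋆ ⋯ ⋆ θ(a_{2k−1},a_{2k})) (with φ_0(a_0) = τ(a_0)). Then b φ_{2k} + (1/(k+1)) B φ_{2k+2} = 0, where b is the Hochschild coboundary with respect to the commutative product ·, and B = 𝒜∘B_0 is Connes' B-operator. 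-/
/-- `φ_{2k}(a_0,…,a_{2k}) = τ(a_0 ⋆ θ(a_1,a_2) ⋆ ⋯ ⋆ θ(a_{2k−1},a_{2k}))`
where `θ(a,b) = a ⋆ b − a · b`. -/
noncomputable def phiCFS {A : Type*} [AddCommGroup A] (τ : A → ℂ) (star cdot : A → A → A)
    (k : ℕ) (a : Fin (2 * k + 1) → A) : ℂ :=
  τ ((List.ofFn fun i : Fin k =>
        star (a ⟨2 * (i : ℕ) + 1, by have := i.isLt; omega⟩)
             (a ⟨2 * (i : ℕ) + 2, by have := i.isLt; omega⟩)
        - cdot (a ⟨2 * (i : ℕ) + 1, by have := i.isLt; omega⟩)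
               (a ⟨2 * (i : ℕ) + 2, by have := i.isLt; omega⟩)).foldl star (a 0))


/-!
Make `A` a ring with multiplication `⋆` and put `θ(x, y) = x ⋆ y − x · y`. Associativity of both
products gives the cocycle identity `x ⋆ θ(y, z) − θ(x · y, z) + θ(x, y · z) = θ(x, y) ⋆ z`, and
with it an induction on `k` shows, already in `A` and for any sequence `c`,
`∑_{j ≤ 2k} (−1)^j w(d_j c) = w(c) ⋆ c_{2k+1} − θ(c_0, c_1) ⋆ ⋯ ⋆ θ(c_{2k}, c_{2k+1})`,
where `w(c) = c_0 ⋆ θ(c_1, c_2) ⋆ ⋯ ⋆ θ(c_{2k−1}, c_{2k})` and `d_j` replaces `c_j, c_{j+1}` by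
`c_j · c_{j+1}`. For a cyclic sequence, the trace property turns the remaining face of `b φ_{2k}`
into `τ(G_1) − τ(w(c) ⋆ c_{2k+1})`, so `b φ_{2k} = τ(G_1) − τ(G_0)` with
`G_i = θ(a_i, a_{i+1}) ⋆ ⋯ ⋆ θ(a_{i+2k}, a_{i+2k+1})`. On the other side `θ(x, 1) = 0` kills the
second half of `B_0 φ_{2k+2}`, the first half at `i` is `τ(G_i)`, and `τ(G_{i+2}) = τ(G_i)` by the
trace property, so `B φ_{2k+2} = (k + 1) (τ(G_0) − τ(G_1))`.
-/

open Finset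

namespace CFS

theorem map_neg_one_pow_mul {R S F : Type*} [Ring R] [Ring S] [FunLike F R S]
    [AddMonoidHomClass F R S] (τ : F) (j : ℕ) (x : R) : τ ((-1) ^ j * x) = (-1) ^ j * τ x := by
  rcases j.even_or_odd with h | h <;> simp [h.neg_one_pow]

theorem foldl_mul_eq_mul_prod {M : Type*} [Monoid M] (x : M) (l : List M) :
    l.foldl (· * ·) x = x * l.prod := by
  rw [List.prod_eq_foldl, ← List.foldl_assoc (α := M) (op := (· * ·)), mul_one]

theorem sum_range_neg_one_pow_mul_of_periodic {S : Type*} [Ring S] {g : ℕ → S}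
    (hg : Function.Periodic g 2) (n : ℕ) :
    ∑ i ∈ range (2 * n), (-1) ^ i * g i = n * (g 0 - g 1) := by
  induction n with
  | zero => simp
  | succ n ih =>
    have h0 : g (2 * n) = g 0 := by simpa [mul_comm] using hg.nat_mul_eq n
    have h1 : g (2 * n + 1) = g 1 := by simpa [mul_comm, add_comm] using hg.nat_mul n 1
    rw [show 2 * (n + 1) = 2 * n + 1 + 1 by ring, sum_range_succ, sum_range_succ, ih,
      Odd.neg_one_pow ⟨n, rfl⟩, Even.neg_one_pow ⟨n, by ring⟩, h0, h1]
    push_cast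
    noncomm_ring

section HochMulSeq

variable {α : Type*} (mul : α → α → α)

def hochMulSeq (j : ℕ) (c : ℕ → α) (n : ℕ) : α :=
  if n < j then c n else if n = j then mul (c n) (c (n + 1)) else c (n + 1)

variable {mul}

theorem hochMulSeq_of_lt {j n : ℕ} (c : ℕ → α) (h : n < j) : hochMulSeq mul j c n = c n :=
  if_pos h

theorem hochMulSeq_self (j : ℕ) (c : ℕ → α) : hochMulSeq mul j c j = mul (c j) (c (j + 1)) := by
  simp [hochMulSeq]

theorem hochMulSeq_of_gt {j n : ℕ} (c : ℕ → α) (h : j < n) : hochMulSeq mul j c n = c (n + 1) := by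
  simp [hochMulSeq, h.not_gt, h.ne']

theorem hochMul_apply_eq_hochMulSeq {m : ℕ} (j : Fin (m + 1)) {a : Fin (m + 2) → α} {c : ℕ → α}
    (hc : ∀ i, a i = c i) (i : Fin (m + 1)) : hochMul mul m j a i = hochMulSeq mul j c i := by
  simp only [hochMul, hochMulSeq, hc, Fin.val_castSucc, Fin.val_succ]

end HochMulSeq

section Word

variable {R : Type*} [Ring R] (cdot : R → R → R)

def theta (x y : R) : R := x * y - cdot x y

def thetaProd (c : ℕ → R) (k : ℕ) : R :=
  (List.ofFn fun i : Fin k => theta cdot (c (2 * i)) (c (2 * i + 1))).prod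

def phiWord (c : ℕ → R) (k : ℕ) : R := c 0 * thetaProd cdot (fun n => c (n + 1)) k

variable {cdot}

theorem theta_cocycle (hassoc : ∀ x y z, cdot (cdot x y) z = cdot x (cdot y z)) (x y z : R) :
    x * theta cdot y z - theta cdot (cdot x y) z + theta cdot x (cdot y z)
      = theta cdot x y * z := by
  simp only [theta, mul_sub, sub_mul, mul_assoc, hassoc]
  abel

theorem theta_one_right (h : ∀ x, cdot x 1 = x) (x : R) : theta cdot x 1 = 0 := by
  rw [theta, mul_one, h, sub_self]

theorem thetaProd_succ (c : ℕ → R) (k : ℕ) :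
    thetaProd cdot c (k + 1) = thetaProd cdot c k * theta cdot (c (2 * k)) (c (2 * k + 1)) := by
  simp only [thetaProd, List.ofFn_succ', List.prod_concat, Fin.val_castSucc, Fin.val_last]

theorem thetaProd_succ' (c : ℕ → R) (k : ℕ) :
    thetaProd cdot c (k + 1) = theta cdot (c 0) (c 1) * thetaProd cdot (fun n => c (n + 2)) k := by
  simp [thetaProd, List.ofFn_succ, mul_add, add_assoc]

theorem thetaProd_congr {c c' : ℕ → R} {k : ℕ} (h : ∀ n < 2 * k, c n = c' n) :
    thetaProd cdot c k = thetaProd cdot c' k := by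
  unfold thetaProd
  congr 1
  exact List.ofFn_inj.mpr <| funext fun i => by rw [h _ (by omega), h _ (by omega)]

theorem phiWord_succ (c : ℕ → R) (k : ℕ) :
    phiWord cdot c (k + 1) = phiWord cdot c k * theta cdot (c (2 * k + 1)) (c (2 * k + 2)) := by
  rw [phiWord, phiWord, thetaProd_succ, mul_assoc]

theorem phiWord_congr {c c' : ℕ → R} {k : ℕ} (h : ∀ n ≤ 2 * k, c n = c' n) :
    phiWord cdot c k = phiWord cdot c' k := by
  rw [phiWord, phiWord, h 0 (Nat.zero_le _), thetaProd_congr fun n hn => h (n + 1) (by omega)]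

theorem sum_neg_one_pow_mul_phiWord_hochMulSeq
    (hassoc : ∀ x y z, cdot (cdot x y) z = cdot x (cdot y z)) (c : ℕ → R) (k : ℕ) :
    ∑ j ∈ range (2 * k + 1), (-1 : R) ^ j * phiWord cdot (hochMulSeq cdot j c) k
      = phiWord cdot c k * c (2 * k + 1) - thetaProd cdot c (k + 1) := by
  induction k with
  | zero =>
    simp [phiWord, thetaProd, theta, hochMulSeq_self]
  | succ k ih =>
    have hlow : ∀ j ∈ range (2 * k + 1), phiWord cdot (hochMulSeq cdot j c) (k + 1)
        = phiWord cdot (hochMulSeq cdot j c) k * theta cdot (c (2 * k + 2)) (c (2 * k + 3)) := by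
      intro j hj
      have hjk := mem_range.mp hj
      rw [phiWord_succ, hochMulSeq_of_gt c (by omega), hochMulSeq_of_gt c (by omega)]
    have hprefix : ∀ j, 2 * k < j → phiWord cdot (hochMulSeq cdot j c) k = phiWord cdot c k :=
      fun j hj => phiWord_congr fun n hn => hochMulSeq_of_lt c (by omega)
    have hodd : phiWord cdot (hochMulSeq cdot (2 * k + 1) c) (k + 1)
        = phiWord cdot c k * theta cdot (cdot (c (2 * k + 1)) (c (2 * k + 2))) (c (2 * k + 3)) := by
      rw [phiWord_succ, hprefix _ (by omega), hochMulSeq_self, hochMulSeq_of_gt c (by omega)]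
    have heven : phiWord cdot (hochMulSeq cdot (2 * k + 2) c) (k + 1)
        = phiWord cdot c k * theta cdot (c (2 * k + 1)) (cdot (c (2 * k + 2)) (c (2 * k + 3))) := by
      rw [phiWord_succ, hprefix _ (by omega), hochMulSeq_self, hochMulSeq_of_lt c (by omega)]
    have hsum : ∑ j ∈ range (2 * k + 1), (-1 : R) ^ j * phiWord cdot (hochMulSeq cdot j c) (k + 1)
        = (phiWord cdot c k * c (2 * k + 1) - thetaProd cdot c (k + 1))
          * theta cdot (c (2 * k + 2)) (c (2 * k + 3)) := by
      rw [← ih, sum_mul]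
      exact sum_congr rfl fun j hj => by rw [hlow j hj, mul_assoc]
    -- the two new faces and the old boundary term combine through `theta_cocycle`
    rw [show 2 * (k + 1) + 1 = 2 * k + 1 + 1 + 1 by ring, sum_range_succ, sum_range_succ, hsum,
      hodd, show 2 * k + 1 + 1 = 2 * k + 2 from rfl, heven, phiWord_succ, thetaProd_succ c (k + 1),
      show 2 * (k + 1) + 1 = 2 * k + 3 by ring, show 2 * (k + 1) = 2 * k + 2 by ring,
      Odd.neg_one_pow ⟨k, rfl⟩, Even.neg_one_pow ⟨k + 1, by ring⟩, mul_assoc,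
      ← theta_cocycle hassoc]
    noncomm_ring

end Word

section Trace

variable {R M : Type*} [Ring R] {cdot : R → R → R}

theorem map_thetaProd_shift_two (τ : R → M) (hτ : ∀ x y, τ (x * y) = τ (y * x))
    {c : ℕ → R} {k : ℕ} (hc : Function.Periodic c (2 * k + 2)) :
    τ (thetaProd cdot (fun n => c (n + 2)) (k + 1)) = τ (thetaProd cdot c (k + 1)) := by
  rw [thetaProd_succ, thetaProd_succ', hτ, show 2 * k + 2 = 0 + (2 * k + 2) by ring, hc,
    show 2 * k + 1 + 2 = 1 + (2 * k + 2) by ring, hc]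

theorem map_phiWord_update_zero [AddCommGroup M] {F : Type*} [FunLike F R M]
    [AddMonoidHomClass F R M] (τ : F) (hτ : ∀ x y, τ (x * y) = τ (y * x)) {c : ℕ → R} {k : ℕ}
    (hc : c (2 * k + 2) = c 0) :
    τ (phiWord cdot (Function.update c 0 (cdot (c (2 * k + 1)) (c 0))) k)
      = τ (phiWord cdot c k * c (2 * k + 1)) - τ (thetaProd cdot (fun n => c (n + 1)) (k + 1)) := by
  have hcdot :
      cdot (c (2 * k + 1)) (c 0) = c (2 * k + 1) * c 0 - theta cdot (c (2 * k + 1)) (c 0) :=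
    (sub_sub_cancel _ _).symm
  simp only [phiWord, Function.update_self, Function.update_of_ne (Nat.succ_ne_zero _)]
  rw [thetaProd_succ, hc, hcdot, sub_mul, map_sub, mul_assoc, hτ, hτ (theta cdot _ _), mul_assoc]

end Trace

section Tuples

variable {R : Type*} [Ring R] {cdot : R → R → R}

theorem phiCFS_eq_phiWord (τ : R → ℂ) {k : ℕ} {a : Fin (2 * k + 1) → R} {c : ℕ → R}
    (hc : ∀ i, a i = c i) : phiCFS τ (· * ·) cdot k a = τ (phiWord cdot c k) := by
  simp only [phiCFS, phiWord, thetaProd, theta, hc, foldl_mul_eq_mul_prod, Fin.val_zero]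

theorem phiCFS_eq_zero_of_last_eq_one (hone : ∀ x, cdot x 1 = x) {F : Type*} [FunLike F R ℂ]
    [AddMonoidHomClass F R ℂ] (τ : F) {k : ℕ} {a : Fin (2 * (k + 1) + 1) → R}
    (ha : a (Fin.last _) = 1) : phiCFS τ (· * ·) cdot (k + 1) a = 0 := by
  set c : ℕ → R := fun n => if h : n < 2 * (k + 1) + 1 then a ⟨n, h⟩ else 0
  have hlast : c (2 * k + 1 + 1) = 1 := (dif_pos (by omega)).trans ha
  rw [phiCFS_eq_phiWord τ (c := c) fun i => (dif_pos i.isLt).symm, phiWord, thetaProd_succ, hlast,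
    theta_one_right hone, mul_zero, mul_zero, map_zero]

theorem phiCFS_cons_one (τ : R → ℂ) {k : ℕ} {a : Fin (2 * k + 2) → R} {c : ℕ → R}
    (hc : ∀ i, a i = c i) (hper : Function.Periodic c (2 * k + 2)) (i : Fin (2 * k + 2)) :
    phiCFS τ (· * ·) cdot (k + 1) (Fin.cons 1 fun j : Fin (2 * k + 2) => a (i + j))
      = τ (thetaProd cdot (fun n => c (n + i)) (k + 1)) := by
  rw [phiCFS_eq_phiWord τ (c := fun n => if n = 0 then 1 else c (n - 1 + i)), phiWord]
  · simp
  · intro j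
    induction j using Fin.cases with
    | zero => simp
    | succ j =>
      rw [Fin.cons_succ, hc, Fin.val_add, hper.map_mod_nat, Fin.val_succ,
        if_neg (Nat.succ_ne_zero _), Nat.add_sub_cancel, add_comm]

variable {F : Type*} [FunLike F R ℂ] [AddMonoidHomClass F R ℂ] (τ : F) {k : ℕ}
  {a : Fin (2 * k + 2) → R} {c : ℕ → R}

theorem sum_neg_one_pow_mul_phiCFS_hochMul
    (hassoc : ∀ x y z, cdot (cdot x y) z = cdot x (cdot y z)) (hc : ∀ i, a i = c i) :
    ∑ j : Fin (2 * k + 1), (-1 : ℂ) ^ (j : ℕ) * phiCFS τ (· * ·) cdot k (hochMul cdot (2 * k) j a)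
      = τ (phiWord cdot c k * c (2 * k + 1)) - τ (thetaProd cdot c (k + 1)) := by
  simp only [phiCFS_eq_phiWord τ (hochMul_apply_eq_hochMulSeq _ hc), ← map_neg_one_pow_mul]
  rw [Fin.sum_univ_eq_sum_range (fun j => τ ((-1) ^ j * phiWord cdot (hochMulSeq cdot j c) k)),
    ← map_sum, sum_neg_one_pow_mul_phiWord_hochMulSeq hassoc, map_sub]

theorem phiCFS_cyclic_face (hτ : ∀ x y, τ (x * y) = τ (y * x)) (hc : ∀ i, a i = c i)
    (hper : Function.Periodic c (2 * k + 2)) :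
    phiCFS τ (· * ·) cdot k
        (fun i => if i = 0 then cdot (a (Fin.last (2 * k + 1))) (a 0) else a i.castSucc)
      = τ (phiWord cdot c k * c (2 * k + 1)) - τ (thetaProd cdot (fun n => c (n + 1)) (k + 1)) := by
  rw [phiCFS_eq_phiWord τ (c := Function.update c 0 (cdot (c (2 * k + 1)) (c 0))),
    map_phiWord_update_zero τ hτ hper.eq]
  intro i
  induction i using Fin.cases with
  | zero => simp [hc]
  | succ j => simp [hc]

theorem sum_neg_one_pow_mul_connesB_phiCFS (hone : ∀ x, cdot x 1 = x)
    (hτ : ∀ x y, τ (x * y) = τ (y * x)) (hc : ∀ i, a i = c i)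
    (hper : Function.Periodic c (2 * k + 2)) :
    ∑ i : Fin (2 * k + 2), (-1 : ℂ) ^ (i : ℕ) *
        (phiCFS τ (· * ·) cdot (k + 1) (Fin.cons 1 fun j : Fin (2 * k + 2) => a (i + j))
          - phiCFS τ (· * ·) cdot (k + 1) (Fin.snoc (fun j : Fin (2 * k + 2) => a (i + j)) 1))
      = (k + 1) *
          (τ (thetaProd cdot c (k + 1)) - τ (thetaProd cdot (fun n => c (n + 1)) (k + 1))) := by
  simp only [phiCFS_cons_one τ hc hper, phiCFS_eq_zero_of_last_eq_one hone τ (Fin.snoc_last _ _),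
    sub_zero]
  rw [Fin.sum_univ_eq_sum_range
      (fun i => (-1 : ℂ) ^ i * τ (thetaProd cdot (fun n => c (n + i)) (k + 1))),
    show 2 * k + 2 = 2 * (k + 1) by ring, sum_range_neg_one_pow_mul_of_periodic]
  · push_cast
    simp only [add_zero]
  · intro i
    have h := map_thetaProd_shift_two τ hτ (cdot := cdot) (c := fun n => c (n + i)) (k := k)
      fun n => by simp only [add_right_comm n, hper (n + i)]
    simpa only [add_assoc, add_comm 2 i] using h

end Tuples

abbrev ringOfMul {A : Type*} [AddCommGroup A] (mul : A → A → A) (one : A)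
    (hadd_left : ∀ x y z, mul (x + y) z = mul x z + mul y z)
    (hadd_right : ∀ x y z, mul x (y + z) = mul x y + mul x z)
    (hassoc : ∀ x y z, mul (mul x y) z = mul x (mul y z))
    (hone_left : ∀ x, mul one x = x) (hone_right : ∀ x, mul x one = x) : Ring A :=
  { ‹AddCommGroup A› with
    mul := mul
    one := one
    left_distrib := hadd_right
    right_distrib := hadd_left
    zero_mul := fun x => (by simpa using hadd_left 0 0 x : mul 0 x = 0)
    mul_zero := fun x => (by simpa using hadd_right x 0 0 : mul x 0 = 0)
    mul_assoc := hassoc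
    one_mul := hone_left
    mul_one := hone_right }

end CFS

open CFS

theorem cfs_b_B_cocycle_identity_general
    {A : Type*} [AddCommGroup A] [Module ℂ A]
    (star cdot : A → A → A) (one : A)
    (hstar_add_left : ∀ x y z : A, star (x + y) z = star x z + star y z)
    (hstar_add_right : ∀ x y z : A, star x (y + z) = star x y + star x z)
    (hstar_assoc : ∀ x y z : A, star (star x y) z = star x (star y z))
    (hcdot_assoc : ∀ x y z : A, cdot (cdot x y) z = cdot x (cdot y z))
    (hstar_one_left : ∀ x : A, star one x = x)
    (hstar_one_right : ∀ x : A, star x one = x)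
    (hcdot_one_right : ∀ x : A, cdot x one = x)
    (τ : A →ₗ[ℂ] ℂ)
    (hτ_trace : ∀ a b : A, τ (star a b) = τ (star b a))
    (k : ℕ) :
    ∀ a : Fin (2 * k + 2) → A,
      ((∑ j : Fin (2 * k + 1),
          (-1 : ℂ) ^ (j : ℕ) * phiCFS (⇑τ) star cdot k (hochMul cdot (2 * k) j a))
        + (-1 : ℂ) ^ (2 * k + 1) *
            phiCFS (⇑τ) star cdot k
              (fun i => if i = 0 then cdot (a (Fin.last (2 * k + 1))) (a 0) else a i.castSucc))
      + (1 / ((k : ℂ) + 1)) *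
          (∑ i : Fin (2 * k + 2), (-1 : ℂ) ^ (i : ℕ) *
            (phiCFS (⇑τ) star cdot (k + 1) (Fin.cons one (fun j : Fin (2 * k + 2) => a (i + j)))
              - phiCFS (⇑τ) star cdot (k + 1) (Fin.snoc (fun j : Fin (2 * k + 2) => a (i + j)) one))) = 0 := by
  intro a
  let _ : Ring A := ringOfMul star one hstar_add_left hstar_add_right hstar_assoc hstar_one_left
    hstar_one_right
  change ∀ x y, τ (x * y) = τ (y * x) at hτ_trace
  rw [show star = (· * ·) from rfl, show one = (1 : A) from rfl]
  set c : ℕ → A := fun n => a ⟨n % (2 * k + 2), Nat.mod_lt _ (by omega)⟩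
  have hper : Function.Periodic c (2 * k + 2) := fun n => by simp [c]
  have hc : ∀ i : Fin (2 * k + 2), a i = c i := fun i => by simp [c, Nat.mod_eq_of_lt i.isLt]
  rw [sum_neg_one_pow_mul_phiCFS_hochMul τ hcdot_assoc hc, phiCFS_cyclic_face τ hτ_trace hc hper,
    sum_neg_one_pow_mul_connesB_phiCFS τ hcdot_one_right hτ_trace hc hper, Odd.neg_one_pow ⟨k, rfl⟩]
  field_simp
  ring

/-- **Proposition 2** (Connes–Flato–Sternheimer type identity).  Let `A` be a `ℂ`-vector
space with two associative bilinear products, a commutative one `·` and a possibly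
noncommutative one `⋆`, sharing a two-sided unit `1`, and let `τ` be a `⋆`-trace.  With
`θ(a,b) := a⋆b − a·b` and `φ_{2k}(a_0,…,a_{2k}) := τ(a_0 ⋆ θ(a_1,a_2) ⋆ ⋯ ⋆ θ(a_{2k−1},a_{2k}))`,
one has `b φ_{2k} + (1/(k+1)) B φ_{2k+2} = 0`, where `b` is the Hochschild coboundary for
the commutative product and `B = 𝒜 ∘ B₀` is Connes' boundary operator. -/
theorem cfs_b_B_cocycle_identity
    {A : Type*} [AddCommGroup A] [Module ℂ A]
    (star cdot : A → A → A) (one : A)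
    (hstar_add_left : ∀ x y z : A, star (x + y) z = star x z + star y z)
    (hstar_add_right : ∀ x y z : A, star x (y + z) = star x y + star x z)
    (hstar_smul_left : ∀ (c : ℂ) (x y : A), star (c • x) y = c • star x y)
    (hstar_smul_right : ∀ (c : ℂ) (x y : A), star x (c • y) = c • star x y)
    (hcdot_add_left : ∀ x y z : A, cdot (x + y) z = cdot x z + cdot y z)
    (hcdot_add_right : ∀ x y z : A, cdot x (y + z) = cdot x y + cdot x z)
    (hcdot_smul_left : ∀ (c : ℂ) (x y : A), cdot (c • x) y = c • cdot x y)
    (hcdot_smul_right : ∀ (c : ℂ) (x y : A), cdot x (c • y) = c • cdot x y)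
    (hstar_assoc : ∀ x y z : A, star (star x y) z = star x (star y z))
    (hcdot_assoc : ∀ x y z : A, cdot (cdot x y) z = cdot x (cdot y z))
    (hcdot_comm : ∀ x y : A, cdot x y = cdot y x)
    (hstar_one_left : ∀ x : A, star one x = x)
    (hstar_one_right : ∀ x : A, star x one = x)
    (hcdot_one_left : ∀ x : A, cdot one x = x)
    (hcdot_one_right : ∀ x : A, cdot x one = x)
    (τ : A →ₗ[ℂ] ℂ)
    (hτ_trace : ∀ a b : A, τ (star a b) = τ (star b a))
    (k : ℕ) :
    ∀ a : Fin (2 * k + 2) → A,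
      ((∑ j : Fin (2 * k + 1),
          (-1 : ℂ) ^ (j : ℕ) * phiCFS (⇑τ) star cdot k (hochMul cdot (2 * k) j a))
        + (-1 : ℂ) ^ (2 * k + 1) *
            phiCFS (⇑τ) star cdot k
              (fun i => if i = 0 then cdot (a (Fin.last (2 * k + 1))) (a 0) else a i.castSucc))
      + (1 / ((k : ℂ) + 1)) *
          (∑ i : Fin (2 * k + 2), (-1 : ℂ) ^ (i : ℕ) *
            (phiCFS (⇑τ) star cdot (k + 1) (Fin.cons one (fun j : Fin (2 * k + 2) => a (i + j)))
              - phiCFS (⇑τ) star cdot (k + 1) (Fin.snoc (fun j : Fin (2 * k + 2) => a (i + j)) one))) = 0 :=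
  cfs_b_B_cocycle_identity_general star cdot one hstar_add_left hstar_add_right hstar_assoc
    hcdot_assoc hstar_one_left hstar_one_right hcdot_one_right τ hτ_trace k
end

section
/- Let n ≥ 1 and let f : ℝ^n∖{0} → ℂ be smooth and positively homogeneous of degree −(n−1), i.e. f(tξ) = t^{−(n−1)} f(ξ) for all t > 0 and all ξ ≠ 0. Then for every i ∈ {1,…,n}: ∫_{S^{n−1}} (∂_i f)(ω) dS(ω) = 0. -/
open MeasureTheory

open MeasureTheory Metric Set Measure

variable {E : Type*} [NormedAddCommGroup E] [InnerProductSpace ℝ E]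

lemma myHasFDerivAt_norm {x : E} (hx : x ≠ 0) :
    HasFDerivAt (fun y : E => ‖y‖) (‖x‖⁻¹ • innerSL ℝ x) x := by
  have h2 : HasFDerivAt (fun y : E => Real.sqrt (‖y‖ ^ 2))
      ((1 / (2 * Real.sqrt (‖x‖ ^ 2))) • (2 • innerSL ℝ x)) x :=
    (hasStrictFDerivAt_norm_sq x).hasFDerivAt.sqrt (by simpa using norm_ne_zero_iff.2 hx)
  have h3 : (fun y : E => Real.sqrt (‖y‖ ^ 2)) = fun y : E => ‖y‖ := by
    ext y; rw [Real.sqrt_sq (norm_nonneg y)]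
  rw [h3] at h2
  convert h2 using 1
  rw [Real.sqrt_sq (norm_nonneg x)]
  ext y
  simp only [ContinuousLinearMap.smul_apply, ContinuousLinearMap.smul_apply,
    smul_eq_mul]
  have hnx : ‖x‖ ≠ 0 := norm_ne_zero_iff.2 hx
  rw [nsmul_eq_mul]
  field_simp
  ring

local notation "dim" => Module.finrank ℝ

lemma my_polar {E : Type*} [NormedAddCommGroup E] [NormedSpace ℝ E] [MeasurableSpace E]
    [BorelSpace E] [FiniteDimensional ℝ E] [Nontrivial E]
    (μ : Measure E) [μ.IsAddHaarMeasure] (G : E → ℂ) (hG : Integrable G μ) :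
    ∫ x, G x ∂μ = ∫ ω : sphere (0 : E) 1,
      ∫ r in Set.Ioi (0 : ℝ), (r ^ (dim E - 1)) • G (r • (ω : E)) ∂volume ∂μ.toSphere := by
  have hs : MeasurableSet ({(0 : E)}ᶜ) := (measurableSet_singleton _).compl
  set F : sphere (0 : E) 1 × Set.Ioi (0 : ℝ) → ℂ := fun p => G ((p.2 : ℝ) • (p.1 : E)) with hF
  have hres : Integrable G (μ.restrict {(0 : E)}ᶜ) := hG.restrict
  have hcomap : Integrable (fun x : ({(0:E)}ᶜ : Set E) => G x) (μ.comap Subtype.val) := by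
    have := (MeasurableEmbedding.subtype_coe hs).integrable_map_iff (g := G) (μ := μ.comap Subtype.val)
    rw [map_comap_subtype_coe hs] at this
    exact this.1 hres
  have hFT : (F ∘ (homeomorphUnitSphereProd E)) = fun x : ({(0:E)}ᶜ : Set E) => G x := by
    funext x
    have hx : (x : E) ≠ 0 := x.2
    simp only [Function.comp_apply, hF, homeomorphUnitSphereProd_apply_snd_coe,
      homeomorphUnitSphereProd_apply_fst_coe, smul_smul,
      mul_inv_cancel₀ (norm_ne_zero_iff.2 hx), one_smul]
  have hFint : Integrable F (μ.toSphere.prod (volumeIoiPow (dim E - 1))) := by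
    refine ((μ.measurePreserving_homeomorphUnitSphereProd).integrable_comp_emb
      ((homeomorphUnitSphereProd E).measurableEmbedding)).1 ?_
    rw [hFT]; exact hcomap
  calc ∫ x, G x ∂μ = ∫ x : ({(0:E)}ᶜ : Set E), G x ∂(μ.comap Subtype.val) := by
        rw [integral_subtype_comap hs fun x => G x, restrict_compl_singleton]
    _ = ∫ x : ({(0:E)}ᶜ : Set E), F ((homeomorphUnitSphereProd E) x) ∂(μ.comap Subtype.val) :=
        integral_congr_ae (Filter.Eventually.of_forall fun x => (congrFun hFT x).symm)
    _ = ∫ p, F p ∂(μ.toSphere.prod (volumeIoiPow (dim E - 1))) :=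
        μ.measurePreserving_homeomorphUnitSphereProd.integral_comp
          ((homeomorphUnitSphereProd E).measurableEmbedding) F
    _ = ∫ ω : sphere (0 : E) 1, ∫ r : Set.Ioi (0:ℝ), F (ω, r) ∂(volumeIoiPow (dim E - 1))
          ∂μ.toSphere := integral_prod F hFint
    _ = _ := by
        refine integral_congr_ae (Filter.Eventually.of_forall fun ω => ?_)
        simp only [Measure.volumeIoiPow, ENNReal.ofReal, hF]
        rw [integral_withDensity_eq_integral_smul
          ((measurable_subtype_coe.pow_const _).real_toNNReal)
          (fun r : Set.Ioi (0:ℝ) => G ((r : ℝ) • (ω : E))),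
          integral_subtype_comap measurableSet_Ioi
          (fun a : ℝ => (a ^ (dim E - 1)).toNNReal • G (a • (ω : E)))]
        refine setIntegral_congr_fun measurableSet_Ioi fun r hr => ?_
        rw [NNReal.smul_def, Real.coe_toNNReal _ (pow_nonneg (le_of_lt hr) _)]

noncomputable def myBump : ContDiffBump (3/2 : ℝ) :=
  ⟨1/4, 1/2, by norm_num, by norm_num⟩

lemma myBump_zero_of_le_one {r : ℝ} (hr : r ≤ 1) : myBump r = 0 := by
  apply myBump.zero_of_le_dist
  rw [dist_comm, Real.dist_eq]
  rw [abs_of_nonneg (by linarith)]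
  show (1/2 : ℝ) ≤ 3/2 - r
  linarith

lemma myBump_zero_of_ge_two {r : ℝ} (hr : 2 ≤ r) : myBump r = 0 := by
  apply myBump.zero_of_le_dist
  rw [Real.dist_eq, abs_of_nonneg (by linarith)]
  show (1/2 : ℝ) ≤ r - 3/2
  linarith

lemma myBump_integrable_mul_inv :
    IntegrableOn (fun r : ℝ => myBump r * r⁻¹) (Ioi (0:ℝ)) volume := by
  have hcont : Continuous (fun r : ℝ => myBump r * r⁻¹) := by
    rw [continuous_iff_continuousAt]
    intro x
    rcases ne_or_eq x 0 with hx | rfl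
    · exact (myBump.continuous.continuousAt).mul (continuousAt_inv₀ hx)
    · have : (fun r : ℝ => myBump r * r⁻¹) =ᶠ[nhds (0:ℝ)] fun _ => 0 := by
        filter_upwards [eventually_lt_nhds (by norm_num : (0:ℝ) < 1)] with r hr
        rw [myBump_zero_of_le_one hr.le, zero_mul]
      exact ContinuousAt.congr (continuousAt_const) this.symm
  have hsupp : HasCompactSupport (fun r : ℝ => myBump r * r⁻¹) := by
    apply HasCompactSupport.intro (isCompact_Icc (a := (1:ℝ)) (b := 2))
    intro r hr
    rcases lt_or_ge r 1 with h | h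
    · rw [myBump_zero_of_le_one h.le, zero_mul]
    · rcases le_or_gt r 2 with h2 | h2
      · exact absurd ⟨h, h2⟩ hr
      · rw [myBump_zero_of_ge_two h2.le, zero_mul]
  exact (hcont.integrable_of_hasCompactSupport hsupp).restrict

lemma myBump_integral_pos : 0 < ∫ r in Ioi (0:ℝ), myBump r * r⁻¹ := by
  have h1 : (0:ℝ) < ∫ r in Icc (5/4 : ℝ) (7/4), myBump r * r⁻¹ := by
    have : ∀ r ∈ Icc (5/4 : ℝ) (7/4), (4/7 : ℝ) ≤ myBump r * r⁻¹ := by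
      intro r hr
      have hrIn : myBump.rIn = 1/4 := rfl
      have h1 : myBump r = 1 := myBump.one_of_mem_closedBall (by
        rw [mem_closedBall, Real.dist_eq, abs_le, hrIn]
        obtain ⟨ha, hb⟩ := hr
        constructor <;> linarith)
      rw [h1, one_mul, show (4/7:ℝ) = (7/4:ℝ)⁻¹ by norm_num]
      gcongr
      · linarith [hr.1]
      · exact hr.2
    calc (0:ℝ) < (4/7) * (volume (Icc (5/4:ℝ) (7/4))).toReal := by
          simp [Real.volume_Icc]; norm_num
      _ ≤ ∫ r in Icc (5/4 : ℝ) (7/4), myBump r * r⁻¹ := by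
          rw [mul_comm, ← smul_eq_mul]
          change volume.real (Icc (5/4:ℝ) (7/4)) • (4/7:ℝ) ≤ _
          rw [← setIntegral_const]
          exact setIntegral_mono_on (integrable_const _)
            (myBump_integrable_mul_inv.mono_set (fun r hr => lt_of_lt_of_le (by norm_num) hr.1))
            measurableSet_Icc this
  have h2 : ∫ r in Icc (5/4 : ℝ) (7/4), myBump r * r⁻¹ ≤ ∫ r in Ioi (0:ℝ), myBump r * r⁻¹ := by
    apply setIntegral_mono_set myBump_integrable_mul_inv
    · filter_upwards [self_mem_ae_restrict measurableSet_Ioi] with r hr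
      exact mul_nonneg myBump.nonneg (inv_nonneg.2 hr.le)
    · exact HasSubset.Subset.eventuallyLE (fun r hr => lt_of_lt_of_le (by norm_num) hr.1)
  linarith

lemma myBump_support_deriv :
    Function.support (deriv (fun s => myBump s)) ⊆ Ioc (0:ℝ) 3 := by
  refine subset_trans (support_deriv_subset) ?_
  have : tsupport (fun s => myBump s) = closedBall (3/2 : ℝ) (1/2) := myBump.tsupport_eq
  rw [this]
  intro r hr
  rw [mem_closedBall, Real.dist_eq, abs_le] at hr
  constructor <;> [linarith [hr.2]; linarith [hr.1]]

lemma myBump_deriv_integral_zero : ∫ r in Ioi (0:ℝ), deriv (fun s => myBump s) r = 0 := by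
  have h0 : ∫ r in Ioi (0:ℝ), deriv (fun s => myBump s) r
      = ∫ r : ℝ, deriv (fun s => myBump s) r := by
    apply setIntegral_eq_integral_of_forall_compl_eq_zero
    intro r hr
    by_contra h
    exact hr (mem_Ioi.2 (myBump_support_deriv h).1)
  rw [h0, ← intervalIntegral.integral_eq_integral_of_support_subset myBump_support_deriv,
    intervalIntegral.integral_deriv_eq_sub (fun x _ => (myBump.contDiff (n := (⊤ : ℕ∞))).differentiable
      (by norm_num) x) ?_]
  · rw [myBump_zero_of_ge_two (by norm_num), myBump_zero_of_le_one (by norm_num), sub_zero]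
  · apply Continuous.intervalIntegrable
    exact (myBump.contDiff (n := (⊤ : ℕ∞))).continuous_deriv (by norm_num)

open scoped RealInnerProductSpace


/-- **Stokes' formula for the Wodzicki residue (core identity).**  If `f` is smooth on
`ℝ^n∖{0}` and positively homogeneous of degree `−(n−1)`, then the integral over the unit
sphere (with respect to the surface measure) of each partial derivative `∂_i f` vanishes. -/
theorem sphere_integral_partialDeriv_homogeneous_eq_zero
    (n : ℕ) (hn : 1 ≤ n) (f : EuclideanSpace ℝ (Fin n) → ℂ)
    (hf_smooth : ContDiffOn ℝ (⊤ : ℕ∞) f {(0 : EuclideanSpace ℝ (Fin n))}ᶜ)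
    (hf_homog : ∀ t : ℝ, 0 < t → ∀ ξ : EuclideanSpace ℝ (Fin n), ξ ≠ 0 →
      f (t • ξ) = (↑(t ^ (-((n : ℝ) - 1))) : ℂ) * f ξ)
    (i : Fin n) :
    ∫ ω : Metric.sphere (0 : EuclideanSpace ℝ (Fin n)) 1,
        fderiv ℝ f (ω : EuclideanSpace ℝ (Fin n)) (EuclideanSpace.single i 1)
      ∂((volume : Measure (EuclideanSpace ℝ (Fin n))).toSphere) = 0 := by
/- proof -/
  haveI : Nontrivial (EuclideanSpace ℝ (Fin n)) := by
    refine ⟨⟨EuclideanSpace.single i 1, 0, fun hc => ?_⟩⟩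
    have := congrArg (fun v : EuclideanSpace ℝ (Fin n) => ‖v‖) hc
    simp at this
  set e : EuclideanSpace ℝ (Fin n) := EuclideanSpace.single i 1 with he
  set χ : ℝ → ℝ := fun r => myBump r with hχ
  have hχsm : ContDiff ℝ ((⊤:ℕ∞) : WithTop ℕ∞) χ := myBump.contDiff
  set h : EuclideanSpace ℝ (Fin n) → ℂ := fun x => ((χ ‖x‖ : ℝ) : ℂ) * f x with hh
  -- differentiability of f away from zero
  have hfd : ∀ x : EuclideanSpace ℝ (Fin n), x ≠ 0 → ContDiffAt ℝ (⊤ : ℕ∞) f x := fun x hx =>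
    hf_smooth.contDiffAt (isOpen_compl_singleton.mem_nhds hx)
  have hfAt : ∀ x : EuclideanSpace ℝ (Fin n), x ≠ 0 → HasFDerivAt f (fderiv ℝ f x) x :=
    fun x hx => ((hfd x hx).differentiableAt (by simp)).hasFDerivAt
  -- h vanishes near points of small norm
  have hz : ∀ x : EuclideanSpace ℝ (Fin n), ‖x‖ < 1 → h =ᶠ[nhds x] 0 := by
    intro x hx
    have hop : IsOpen {y : EuclideanSpace ℝ (Fin n) | ‖y‖ < 1} :=
      isOpen_lt continuous_norm continuous_const
    filter_upwards [hop.mem_nhds hx] with y hy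
    simp only [hh, hχ, myBump_zero_of_le_one (le_of_lt hy), Complex.ofReal_zero, zero_mul,
      Pi.zero_apply]
  -- h is smooth
  have hCD : ContDiff ℝ ((⊤:ℕ∞) : WithTop ℕ∞) h := by
    rw [contDiff_iff_contDiffAt]
    intro x
    rcases eq_or_ne x 0 with rfl | hx
    · exact (contDiffAt_const (c := (0:ℂ))).congr_of_eventuallyEq (hz 0 (by simp))
    · have h1 : ContDiffAt ℝ ((⊤:ℕ∞) : WithTop ℕ∞) (fun y : EuclideanSpace ℝ (Fin n) => ((χ ‖y‖ : ℝ) : ℂ)) x :=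
        Complex.ofRealCLM.contDiff.contDiffAt.comp x
          (hχsm.contDiffAt.comp x (contDiffAt_norm ℝ hx))
      exact h1.mul ((hfd x hx).of_le (by simp))
  have hdiffh : Differentiable ℝ h := hCD.differentiable (by simp)
  have hsupp : HasCompactSupport h := by
    apply HasCompactSupport.intro (isCompact_closedBall (0 : EuclideanSpace ℝ (Fin n)) 2)
    intro x hx
    rw [Metric.mem_closedBall, dist_zero_right, not_le] at hx
    simp only [hh, hχ, myBump_zero_of_ge_two (le_of_lt hx), Complex.ofReal_zero, zero_mul]
  have hcont : Continuous fun x => fderiv ℝ h x e :=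
    (hCD.continuous_fderiv (by simp)).clm_apply continuous_const
  have hGsupp : HasCompactSupport fun x => fderiv ℝ h x e := hsupp.fderiv_apply ℝ e
  have hGint : Integrable (fun x => fderiv ℝ h x e) volume :=
    hcont.integrable_of_hasCompactSupport hGsupp
  -- integration by parts : the integral of the derivative of h vanishes
  have hIBP : ∫ x, fderiv ℝ h x e = 0 := by
    have h0 := integral_mul_fderiv_eq_neg_fderiv_mul_of_integrable (μ := (volume : Measure (EuclideanSpace ℝ (Fin n))))
      (f := fun _ => (1:ℂ)) (g := h) (v := e) ?_ ?_ ?_ (fun x _ => differentiableAt_const _) (fun x _ => hdiffh x)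
    · simpa [fderiv_const] using h0
    · simpa [fderiv_const] using
        (integrable_zero (EuclideanSpace ℝ (Fin n)) ℂ (volume : Measure (EuclideanSpace ℝ (Fin n))))
    · simpa using hGint
    · simpa using hCD.continuous.integrable_of_hasCompactSupport hsupp
  -- homogeneity of the derivative
  have hom_deriv : ∀ x : EuclideanSpace ℝ (Fin n), x ≠ 0 → ∀ t : ℝ, 0 < t →
      fderiv ℝ f (t • x) e = ((t ^ (-(n:ℝ)) : ℝ) : ℂ) * fderiv ℝ f x e := by
    intro x hx t ht
    have htx : t • x ≠ 0 := smul_ne_zero (ne_of_gt ht) hx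
    have hgA : HasFDerivAt (fun y => f (t • y))
        ((fderiv ℝ f (t • x)).comp (t • ContinuousLinearMap.id ℝ (EuclideanSpace ℝ (Fin n)))) x :=
      (hfAt _ htx).comp x ((hasFDerivAt_id x).const_smul t)
    have hgB : HasFDerivAt (fun y => f (t • y))
        (((t ^ (-((n:ℝ)-1)) : ℝ) : ℂ) • fderiv ℝ f x) x := by
      have hB0 : HasFDerivAt (fun y => ((t ^ (-((n:ℝ)-1)) : ℝ) : ℂ) * f y)
          (((t ^ (-((n:ℝ)-1)) : ℝ) : ℂ) • fderiv ℝ f x) x := (hfAt x hx).const_mul _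
      apply hB0.congr_of_eventuallyEq
      filter_upwards [isOpen_compl_singleton.mem_nhds hx] with y hy
      exact hf_homog t ht y hy
    have huniq := hgA.unique hgB
    have h2 := congrArg (fun L : EuclideanSpace ℝ (Fin n) →L[ℝ] ℂ => L e) huniq
    simp only [ContinuousLinearMap.comp_apply, ContinuousLinearMap.smul_apply,
      ContinuousLinearMap.coe_id', id_eq] at h2
    -- h2 : fderiv ℝ f (t • x) (t • e) = (t^{-(n-1)} : ℂ) • fderiv ℝ f x e
    rw [ContinuousLinearMap.map_smul] at h2
    have ht0 : (t:ℂ) ≠ 0 := Complex.ofReal_ne_zero.2 (ne_of_gt ht)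
    have h3 : (t : ℂ) * fderiv ℝ f (t • x) e = ((t ^ (-((n:ℝ)-1)) : ℝ) : ℂ) * fderiv ℝ f x e := by
      simpa [Complex.real_smul, smul_eq_mul] using h2
    have hpow : ((t ^ (-(n:ℝ)) : ℝ) : ℂ) = (t:ℂ)⁻¹ * ((t ^ (-((n:ℝ)-1)) : ℝ) : ℂ) := by
      rw [← Complex.ofReal_inv, ← Complex.ofReal_mul]
      congr 1
      rw [← Real.rpow_neg_one t, ← Real.rpow_add ht]
      congr 1
      ring
    rw [hpow, mul_assoc, ← h3, ← mul_assoc, inv_mul_cancel₀ ht0, one_mul]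
  -- pointwise formula for the derivative of h away from 0
  have hderivh : ∀ x : EuclideanSpace ℝ (Fin n), x ≠ 0 →
      fderiv ℝ h x e = ((χ ‖x‖ : ℝ) : ℂ) * fderiv ℝ f x e
        + ((deriv χ ‖x‖ * (‖x‖⁻¹ * (inner ℝ x e : ℝ)) : ℝ) : ℂ) * f x := by
    intro x hx
    have hnorm : HasFDerivAt (fun y : EuclideanSpace ℝ (Fin n) => ‖y‖)
        (‖x‖⁻¹ • innerSL ℝ x) x := myHasFDerivAt_norm hx
    have hχAt : HasDerivAt χ (deriv χ ‖x‖) ‖x‖ :=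
      ((hχsm.differentiable (by simp)) ‖x‖).hasDerivAt
    have hφ : HasFDerivAt (fun y : EuclideanSpace ℝ (Fin n) => χ ‖y‖)
        ((deriv χ ‖x‖) • (‖x‖⁻¹ • innerSL ℝ x)) x := hχAt.comp_hasFDerivAt x hnorm
    have hφC : HasFDerivAt (fun y : EuclideanSpace ℝ (Fin n) => ((χ ‖y‖ : ℝ) : ℂ))
        (Complex.ofRealCLM.comp ((deriv χ ‖x‖) • (‖x‖⁻¹ • innerSL ℝ x))) x :=
      Complex.ofRealCLM.hasFDerivAt.comp x hφ
    have hmul : HasFDerivAt h _ x := hφC.mul (hfAt x hx)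
    rw [hmul.fderiv]
    simp only [ContinuousLinearMap.add_apply, ContinuousLinearMap.smul_apply,
      ContinuousLinearMap.comp_apply, innerSL_apply_apply, Complex.ofRealCLM_apply,
      smul_eq_mul, Complex.real_smul, Complex.ofReal_mul, Complex.ofReal_inv]
    ring
  -- pointwise formula for the polar integrand
  have hpt : ∀ ω : EuclideanSpace ℝ (Fin n), ‖ω‖ = 1 → ∀ r : ℝ, 0 < r →
      ((r : ℝ) ^ (n - 1)) • fderiv ℝ h (r • ω) e
      = ((deriv χ r : ℝ) : ℂ) * (((ω i : ℝ) : ℂ) * f ω)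
        + ((χ r * r⁻¹ : ℝ) : ℂ) * fderiv ℝ f ω e := by
    intro ω hω r hr
    have hω0 : ω ≠ 0 := by
      intro h0; rw [h0, norm_zero] at hω; norm_num at hω
    have hx0 : r • ω ≠ 0 := smul_ne_zero (ne_of_gt hr) hω0
    have hns : ‖r • ω‖ = r := by
      rw [norm_smul, hω, Real.norm_eq_abs, abs_of_pos hr, mul_one]
    have hfx : f (r • ω) = ((r ^ (-((n:ℝ)-1)) : ℝ) : ℂ) * f ω := hf_homog r hr ω hω0
    have hdx : fderiv ℝ f (r • ω) e = ((r ^ (-(n:ℝ)) : ℝ) : ℂ) * fderiv ℝ f ω e :=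
      hom_deriv ω hω0 r hr
    have hin : (inner ℝ (r • ω) e : ℝ) = r * ω i := by
      rw [he, real_inner_smul_left]
      congr 1
      simpa using EuclideanSpace.inner_single_right (𝕜 := ℝ) i 1 ω
    rw [hderivh _ hx0, hns, hfx, hdx, hin]
    have e1 : (r:ℝ) ^ (n-1 : ℕ) = r ^ ((n:ℝ) - 1) := by
      rw [← Real.rpow_natCast r (n-1), Nat.cast_sub hn, Nat.cast_one]
    have hs0 : ((r ^ ((n:ℝ)-1) : ℝ) : ℂ) ≠ 0 :=
      Complex.ofReal_ne_zero.2 (ne_of_gt (Real.rpow_pos_of_pos hr _))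
    have hr0 : (r : ℂ) ≠ 0 := Complex.ofReal_ne_zero.2 (ne_of_gt hr)
    have hsq : ((r ^ (-((n:ℝ)-1)) : ℝ) : ℂ) = ((r ^ ((n:ℝ)-1) : ℝ) : ℂ)⁻¹ := by
      rw [← Complex.ofReal_inv]
      congr 1
      exact Real.rpow_neg (le_of_lt hr) _ |>.trans rfl
    have hpC : ((r ^ (-(n:ℝ)) : ℝ) : ℂ) = ((r:ℝ) : ℂ)⁻¹ * ((r ^ ((n:ℝ)-1) : ℝ) : ℂ)⁻¹ := by
      rw [← Complex.ofReal_inv, ← Complex.ofReal_inv, ← Complex.ofReal_mul]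
      congr 1
      rw [← Real.rpow_neg_one r, ← Real.rpow_neg (le_of_lt hr), ← Real.rpow_add hr]
      congr 1
      ring
    have e1C : ((r ^ (n-1 : ℕ) : ℝ) : ℂ) = ((r ^ ((n:ℝ)-1) : ℝ) : ℂ) := by rw [e1]
    rw [Complex.real_smul, e1C, hsq, hpC]
    push_cast
    field_simp
    ring
  -- the inner (radial) integral
  have hc : (0:ℝ) < ∫ r in Set.Ioi (0:ℝ), χ r * r⁻¹ := myBump_integral_pos
  have hint1 : Integrable (fun r : ℝ => deriv χ r) volume :=
    ((hχsm.continuous_deriv (by exact_mod_cast le_top)).integrable_of_hasCompactSupport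
      (myBump.hasCompactSupport.deriv))
  have hinner : ∀ ω : Metric.sphere (0 : EuclideanSpace ℝ (Fin n)) 1,
      (∫ r in Set.Ioi (0:ℝ),
        (r ^ (n - 1)) • fderiv ℝ h (r • (ω : EuclideanSpace ℝ (Fin n))) e)
      = ((∫ r in Set.Ioi (0:ℝ), χ r * r⁻¹ : ℝ) : ℂ)
          * fderiv ℝ f (ω : EuclideanSpace ℝ (Fin n)) e := by
    intro ω
    have hω1 : ‖(ω : EuclideanSpace ℝ (Fin n))‖ = 1 := mem_sphere_zero_iff_norm.1 ω.2
    rw [setIntegral_congr_fun measurableSet_Ioi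
      (g := fun r : ℝ => ((deriv χ r : ℝ) : ℂ)
          * ((((ω : EuclideanSpace ℝ (Fin n)) i : ℝ) : ℂ) * f (ω : EuclideanSpace ℝ (Fin n)))
        + ((χ r * r⁻¹ : ℝ) : ℂ) * fderiv ℝ f (ω : EuclideanSpace ℝ (Fin n)) e)
      (fun r hr => hpt (ω : EuclideanSpace ℝ (Fin n)) hω1 r hr)]
    rw [integral_add]
    · have hA : (∫ a in Set.Ioi (0:ℝ), ((deriv χ a : ℝ) : ℂ))
          = ((∫ a in Set.Ioi (0:ℝ), deriv χ a : ℝ) : ℂ) := integral_ofReal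
      have hB : (∫ a in Set.Ioi (0:ℝ), ((χ a * a⁻¹ : ℝ) : ℂ))
          = ((∫ a in Set.Ioi (0:ℝ), χ a * a⁻¹ : ℝ) : ℂ) := integral_ofReal
      rw [integral_mul_const, integral_mul_const, hA, hB, myBump_deriv_integral_zero]
      simp
    · exact (hint1.ofReal.mul_const _).restrict
    · exact ((myBump_integrable_mul_inv.ofReal).mul_const _)
  -- polar coordinates
  have hpolar := my_polar (volume : Measure (EuclideanSpace ℝ (Fin n)))
    (fun x => fderiv ℝ h x e) hGint
  rw [hIBP, finrank_euclideanSpace_fin] at hpolar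
  have hfinal : 0 = ((∫ r in Set.Ioi (0:ℝ), χ r * r⁻¹ : ℝ) : ℂ)
      * ∫ ω : Metric.sphere (0 : EuclideanSpace ℝ (Fin n)) 1,
          fderiv ℝ f (ω : EuclideanSpace ℝ (Fin n)) e ∂(volume.toSphere) := by
    rw [← integral_const_mul]
    rw [hpolar]
    exact integral_congr_ae (Filter.Eventually.of_forall fun ω => hinner ω)
  have hcne : ((∫ r in Set.Ioi (0:ℝ), χ r * r⁻¹ : ℝ) : ℂ) ≠ 0 :=
    Complex.ofReal_ne_zero.2 (ne_of_gt hc)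
  have := hfinal.symm
  rcases mul_eq_zero.1 this with hbad | hgood
  · exact absurd hbad hcne
  · exact hgood
end
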